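/- arXiv:1703.08594 — 2 statements merged into one kernel-verified Lean document; each statement's English description precedes it below -/
import Mathlib

section
/- Given compact convex sets C ⊆ B in ℝ^N and an open set U ⊆ ℝ^N containing C, there is a finite increasing sequence of compact convex sets K₁ ⊆ K₂ ⊆ ⋯ ⊆ K_{m+1} = B such that C ⊆ K₁ ⊆ U and for every i = 1,…,m the pair (Kᵢ, K_{i+1}) is a simple convex pair. -/
/-- Lemma 2.3: given compact convex sets `C ⊆ B` and an open set `U ⊇ C`, there is a
finite increasing chain of compact convex sets from a set between `C` and `U` up to `B`,
each consecutive pair being a simple convex pair. -/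
theorem chain_of_simple_convex_pairs (N : ℕ) (C B U : Set (Fin N → ℝ))
    (hCc : IsCompact C) (hCconv : Convex ℝ C)
    (hBc : IsCompact B) (hBconv : Convex ℝ B)
    (hCB : C ⊆ B) (hU : IsOpen U) (hCU : C ⊆ U) :
    ∃ (m : ℕ) (K : Fin (m + 1) → Set (Fin N → ℝ)),
      (∀ i, IsCompact (K i) ∧ Convex ℝ (K i)) ∧
      (∀ i j, i ≤ j → K i ⊆ K j) ∧
      K (Fin.last m) = B ∧
      C ⊆ K 0 ∧ K 0 ⊆ U ∧
      (∀ i : Fin m, ∃ (lam : (Fin N → ℝ) →ₗ[ℝ] ℝ) (a : ℝ),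
        K i.castSucc = {z ∈ K i.succ | lam z ≤ a}) := by
  classical
  have h : ∀ x : Fin N → ℝ, ∃ (f : (Fin N → ℝ) →ₗ[ℝ] ℝ) (a : ℝ),
      (∀ c ∈ C, f c ≤ a) ∧ (x ∈ B \ U → a < f x) := by
    intro x
    by_cases hx : x ∈ B \ U
    · have hxC : x ∉ C := fun hc => hx.2 (hCU hc)
      obtain ⟨f, u, hfu, hux⟩ :=
        geometric_hahn_banach_closed_point hCconv hCc.isClosed hxC
      exact ⟨f.toLinearMap, u, fun c hc => (hfu c hc).le, fun _ => hux⟩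
    · exact ⟨0, 0, fun c _ => le_refl 0, fun h' => absurd h' hx⟩
  choose f a hfC hfx using h
  have hcont : ∀ x, Continuous (f x) := fun x =>
    LinearMap.continuous_of_finiteDimensional (f x)
  have hBU : IsCompact (B \ U) := hBc.diff hU
  obtain ⟨t, ht⟩ := hBU.elim_finite_subcover (fun x => {z | a x < f x z})
    (fun x => isOpen_lt continuous_const (hcont x))
    (fun z hz => Set.mem_iUnion.2 ⟨z, hfx z hz⟩)
  set l := t.toList with hl
  set K : Fin (l.length + 1) → Set (Fin N → ℝ) := fun j =>
    B ∩ ⋂ i : Fin l.length, {z | (j : ℕ) ≤ (i : ℕ) → f (l.get i) z ≤ a (l.get i)} with hK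
  have hmem : ∀ (j : Fin (l.length + 1)) (z : Fin N → ℝ),
      z ∈ K j ↔ z ∈ B ∧ ∀ i : Fin l.length, (j : ℕ) ≤ (i : ℕ) → f (l.get i) z ≤ a (l.get i) := by
    intro j z
    simp [hK, Set.mem_iInter]
  refine ⟨l.length, K, ?_, ?_, ?_, ?_, ?_, ?_⟩
  · intro j
    have hclosed : IsClosed (K j) := by
      refine IsClosed.inter hBc.isClosed (isClosed_iInter fun i => ?_)
      by_cases hji : (j : ℕ) ≤ (i : ℕ)
      · simpa [hji] using isClosed_le (hcont (l.get i)) continuous_const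
      · simp [hji]
    constructor
    · exact hBc.of_isClosed_subset hclosed fun z hz => hz.1
    · refine hBconv.inter (convex_iInter fun i => ?_)
      by_cases hji : (j : ℕ) ≤ (i : ℕ)
      · simpa [hji] using convex_halfSpace_le (f (l.get i)).isLinear (a (l.get i))
      · simp only [hji]; simpa using convex_univ
  · intro i j hij z hz
    rw [hmem] at hz ⊢
    exact ⟨hz.1, fun k hk => hz.2 k (le_trans (Fin.le_iff_val_le_val.mp hij) hk)⟩
  · ext z
    rw [hmem]
    simp only [Fin.val_last]
    exact ⟨fun hz => hz.1, fun hz => ⟨hz, fun i hi => absurd hi (not_le.2 i.isLt)⟩⟩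
  · intro c hc
    rw [hmem]
    exact ⟨hCB hc, fun i _ => hfC (l.get i) c hc⟩
  · intro z hz
    rw [hmem] at hz
    by_contra hzU
    have hzBU : z ∈ B \ U := ⟨hz.1, hzU⟩
    obtain ⟨x, hxt, hxz⟩ := Set.mem_iUnion₂.1 (ht hzBU)
    obtain ⟨i, hi⟩ := List.mem_iff_get.1 (Finset.mem_toList.2 hxt)
    have := hz.2 i (Nat.zero_le _)
    rw [hi] at this
    exact absurd hxz (not_lt.2 this)
  · intro i
    refine ⟨f (l.get i), a (l.get i), ?_⟩
    ext z
    simp only [Set.mem_setOf_eq, hmem, Fin.coe_castSucc, Fin.val_succ]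
    constructor
    · intro hz
      exact ⟨⟨hz.1, fun k hk => hz.2 k (Nat.le_of_succ_le hk)⟩, hz.2 i le_rfl⟩
    · rintro ⟨⟨hzB, hz⟩, hzi⟩
      refine ⟨hzB, fun k hk => ?_⟩
      rcases eq_or_lt_of_le hk with heq | hlt
      · have : k = i := Fin.ext heq.symm
        rw [this]; exact hzi
      · exact hz k hlt
end

section
/- Let K ⊆ ℝ^N be a regular compact convex set (K equals the closure of its interior) and let λ : ℝ^N → ℝ be a nonzero linear functional with a := inf_K λ < b := sup_K λ. Then for every c with a < c < b, the set K_c = {x ∈ K : λ(x) ≤ c} is also a regular compact convex set, i.e. K_c equals the closure of its interior. -/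
lemma closure_subset_closure_interior_of_convex {E : Type*} [NormedAddCommGroup E]
    [NormedSpace ℝ E] {s : Set E} (hs : Convex ℝ s) {x₀ : E} (hx₀ : x₀ ∈ interior s) :
    closure s ⊆ closure (interior s) := by
  intro z hz
  have hne : (nhdsWithin (0 : ℝ) (Set.Ioo 0 1)).NeBot := by
    apply mem_closure_iff_nhdsWithin_neBot.mp
    rw [closure_Ioo one_ne_zero.symm]
    exact Set.mem_Icc.mpr ⟨le_refl _, zero_le_one⟩
  have htend : Filter.Tendsto (fun t : ℝ => t • x₀ + (1 - t) • z)
      (nhdsWithin (0 : ℝ) (Set.Ioo 0 1)) (nhds z) := by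
    have hc : Continuous (fun t : ℝ => t • x₀ + (1 - t) • z) := by continuity
    have := hc.tendsto 0
    simp only [zero_smul, sub_zero, one_smul, zero_add] at this
    exact this.mono_left nhdsWithin_le_nhds
  refine mem_closure_of_tendsto htend ?_
  filter_upwards [self_mem_nhdsWithin] with t ht
  exact hs.combo_interior_closure_mem_interior hx₀ hz ht.1 (by linarith [ht.2]) (by ring)

/-- Cutting a regular compact convex set with a half-space at a non-extremal level
preserves regularity. -/
theorem cut_regular_compact_convex (N : ℕ) (K : Set (Fin N → ℝ))
    (hKc : IsCompact K) (hKconv : Convex ℝ K)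
    (hKreg : K = closure (interior K))
    (lam : (Fin N → ℝ) →ₗ[ℝ] ℝ) (hlam : lam ≠ 0)
    (hab : sInf (lam '' K) < sSup (lam '' K)) :
    ∀ c : ℝ, sInf (lam '' K) < c → c < sSup (lam '' K) →
      IsCompact {x ∈ K | lam x ≤ c} ∧ Convex ℝ {x ∈ K | lam x ≤ c} ∧
      {x ∈ K | lam x ≤ c} = closure (interior {x ∈ K | lam x ≤ c}) := by
  intro c hac hcb
  have hlamc : Continuous lam := lam.continuous_of_finiteDimensional
  have hset : {x ∈ K | lam x ≤ c} = K ∩ lam ⁻¹' Set.Iic c := rfl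
  have hcompact : IsCompact {x ∈ K | lam x ≤ c} := by
    rw [hset]
    exact hKc.inter_right (isClosed_Iic.preimage hlamc)
  have hconv : Convex ℝ {x ∈ K | lam x ≤ c} := by
    rw [hset]
    exact hKconv.inter (convex_Iic c |>.linear_preimage lam)
  refine ⟨hcompact, hconv, ?_⟩
  -- K is nonempty
  have hKne : K.Nonempty := by
    by_contra h
    rw [Set.not_nonempty_iff_eq_empty] at h
    simp [h] at hab
  -- there is y ∈ K with lam y < c
  have hy : ∃ y ∈ K, lam y < c := by
    by_contra h
    push_neg at h
    have : c ≤ sInf (lam '' K) := by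
      apply le_csInf (hKne.image _)
      rintro _ ⟨y, hyK, rfl⟩
      exact h y hyK
    linarith
  obtain ⟨y, hyK, hyc⟩ := hy
  -- interior K is nonempty
  have hintK : (interior K).Nonempty := by
    by_contra h
    rw [Set.not_nonempty_iff_eq_empty] at h
    rw [h, closure_empty] at hKreg
    exact hKne.ne_empty hKreg
  obtain ⟨x₀, hx₀⟩ := hintK
  -- find a point in interior K with lam < c
  have hy' : y ∈ closure K := subset_closure hyK
  -- take t small: t • x₀ + (1-t) • y
  have hex : ∃ z ∈ interior K, lam z < c := by
    rcases lt_or_ge (lam x₀) c with h | h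
    · exact ⟨x₀, hx₀, h⟩
    · -- choose t small enough
      have hd : (0:ℝ) < lam x₀ - lam y := by linarith
      set t : ℝ := (c - lam y) / (2 * (lam x₀ - lam y)) with ht
      have ht0 : 0 < t := div_pos (by linarith) (by linarith)
      have ht1 : t < 1 := by
        rw [ht, div_lt_one (by linarith)]
        linarith
      refine ⟨t • x₀ + (1 - t) • y, ?_, ?_⟩
      · exact hKconv.combo_interior_closure_mem_interior hx₀ hy' ht0 (by linarith) (by ring)
      · have : lam (t • x₀ + (1 - t) • y) = lam y + t * (lam x₀ - lam y) := by
          simp [map_add, map_smul, smul_eq_mul]; ring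
        rw [this, ht]
        have : (c - lam y) / (2 * (lam x₀ - lam y)) * (lam x₀ - lam y) = (c - lam y) / 2 := by
          field_simp
        rw [this]
        linarith
  obtain ⟨z, hzint, hzc⟩ := hex
  -- z is in the interior of the cut set
  have hzint' : z ∈ interior {x ∈ K | lam x ≤ c} := by
    rw [hset]
    have : z ∈ interior K ∩ lam ⁻¹' Set.Iio c := ⟨hzint, hzc⟩
    have hopen : IsOpen (interior K ∩ lam ⁻¹' Set.Iio c) :=
      isOpen_interior.inter (isOpen_Iio.preimage hlamc)
    have hsub : interior K ∩ lam ⁻¹' Set.Iio c ⊆ K ∩ lam ⁻¹' Set.Iic c :=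
      Set.inter_subset_inter interior_subset (Set.preimage_mono Set.Iio_subset_Iic_self)
    exact interior_maximal hsub hopen this
  -- conclude regularity
  apply Set.Subset.antisymm
  · calc {x ∈ K | lam x ≤ c} ⊆ closure {x ∈ K | lam x ≤ c} := subset_closure
      _ ⊆ closure (interior {x ∈ K | lam x ≤ c}) :=
        closure_subset_closure_interior_of_convex hconv hzint'
  · calc closure (interior {x ∈ K | lam x ≤ c})
        ⊆ closure {x ∈ K | lam x ≤ c} := closure_mono interior_subset
      _ = {x ∈ K | lam x ≤ c} := hcompact.isClosed.closure_eq
end
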